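/- Let n ≥ 4 and let λ₁ = λ₂ = λ₃ = λ > 0 (the three-dimensional spherical top case). Then a matrix K in SO(n−1) satisfies ∃ Q ∈ SO(3) with Q Λ Kᵀ = Λ if and only if K is block diagonal of the form K = diag(A, B) with A ∈ SO(3) in the upper-left 3 × 3 block and B ∈ SO(n−4) in the lower-right (n−4) × (n−4) block (all off-diagonal blocks zero). -/

import Mathlib

/-!
Split `Fin (n - 1) = Fin 3 ⊕ Fin (n - 4)` and write `K = [P R; S T]` in blocks. Since
`Λ = λ [I₃ | 0]`, the condition `Q Λ Kᵀ = Λ` says `Q Pᵀ = 1` and `Q Sᵀ = 0`, i.e. `P = Q` and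
`S = 0`. An orthogonal matrix with vanishing lower-left block is block diagonal (the upper-right
block of `KᵀK = 1` reads `Pᵀ R = 0`), and `det K = det Q · det T` puts `T` in `SO(n - 4)`.
-/

/-- The `3 × (n-1)` matrix `Λ` with `Λ₁₁ = λ₁`, `Λ₂₂ = λ₂`, `Λ₃₃ = λ₃` and all other
entries zero. -/
def Lam (n : ℕ) (l1 l2 l3 : ℝ) : Matrix (Fin 3) (Fin (n - 1)) ℝ :=
  Matrix.of fun i j => if (j : ℕ) = (i : ℕ) then ![l1, l2, l3] i else 0

/-- The `n × n` block diagonal matrix `diag(A, B)` built from an `a × a` block `A` and a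
`b × b` block `B`, where `a + b = n`. -/
def embedBlocks {a b n : ℕ} (h : a + b = n) (A : Matrix (Fin a) (Fin a) ℝ)
    (B : Matrix (Fin b) (Fin b) ℝ) : Matrix (Fin n) (Fin n) ℝ :=
  Matrix.reindex (finSumFinEquiv.trans (finCongr h)) (finSumFinEquiv.trans (finCongr h))
    (Matrix.fromBlocks A 0 0 B)

namespace Matrix

variable {m p R : Type*} [Fintype m] [DecidableEq m] [Fintype p] [CommRing R]

theorem fromCols_one_zero_mul_transpose (M : Matrix (m ⊕ p) (m ⊕ p) R) :
    fromCols (1 : Matrix m m R) (0 : Matrix m p R) * Mᵀ =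
      fromCols M.toBlocks₁₁ᵀ M.toBlocks₂₁ᵀ := by
  conv_lhs => rw [← fromBlocks_toBlocks M]
  rw [fromBlocks_transpose, fromCols_mul_fromBlocks]
  simp

variable [DecidableEq p]

theorem reindex_mem_specialOrthogonalGroup_iff {M : Matrix m m R} (e : m ≃ p) :
    reindex e e M ∈ specialOrthogonalGroup p R ↔ M ∈ specialOrthogonalGroup m R := by
  rw [mem_specialOrthogonalGroup_iff, mem_specialOrthogonalGroup_iff, mem_orthogonalGroup_iff',
    mem_orthogonalGroup_iff', det_reindex_self, transpose_reindex, ← coe_reindexAlgEquiv R R e,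
    ← map_mul, map_eq_one_iff _ (AlgEquiv.injective _)]

theorem toBlocks₁₂_eq_zero_of_transpose_mul_self_eq_one {M : Matrix (m ⊕ p) (m ⊕ p) R}
    (hM : Mᵀ * M = 1) (h₂₁ : M.toBlocks₂₁ = 0) : M.toBlocks₁₂ = 0 := by
  rw [← fromBlocks_toBlocks M, h₂₁, fromBlocks_transpose, fromBlocks_multiply,
    ← fromBlocks_one, fromBlocks_inj] at hM
  obtain ⟨h₁₁, h₁₂, -, -⟩ := hM
  simp only [transpose_zero, Matrix.zero_mul, _root_.add_zero] at h₁₁ h₁₂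
  calc M.toBlocks₁₂ = (M.toBlocks₁₁ * M.toBlocks₁₁ᵀ) * M.toBlocks₁₂ := by
        rw [mul_eq_one_comm.mp h₁₁, Matrix.one_mul]
    _ = 0 := by rw [Matrix.mul_assoc, h₁₂, Matrix.mul_zero]

theorem fromBlocks_zero_zero_mem_orthogonalGroup_iff {A : Matrix m m R} {B : Matrix p p R} :
    fromBlocks A 0 0 B ∈ orthogonalGroup (m ⊕ p) R ↔
      A ∈ orthogonalGroup m R ∧ B ∈ orthogonalGroup p R := by
  simp only [mem_orthogonalGroup_iff', fromBlocks_transpose, fromBlocks_multiply,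
    ← fromBlocks_one, fromBlocks_inj]
  simp

theorem fromBlocks_zero_zero_mem_specialOrthogonalGroup {A : Matrix m m R} {B : Matrix p p R}
    (hA : A ∈ specialOrthogonalGroup m R)
    (h : fromBlocks A 0 0 B ∈ specialOrthogonalGroup (m ⊕ p) R) :
    B ∈ specialOrthogonalGroup p R := by
  rw [mem_specialOrthogonalGroup_iff, fromBlocks_zero_zero_mem_orthogonalGroup_iff,
    det_fromBlocks_zero₁₂] at h
  rw [mem_specialOrthogonalGroup_iff] at hA ⊢
  refine ⟨h.1.2, ?_⟩
  simpa [hA.2] using h.2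

theorem exists_mem_specialOrthogonalGroup_mul_fromCols_mul_transpose_iff
    {M : Matrix (m ⊕ p) (m ⊕ p) R} (hM : M ∈ specialOrthogonalGroup (m ⊕ p) R) :
    (∃ Q ∈ specialOrthogonalGroup m R,
        Q * fromCols (1 : Matrix m m R) (0 : Matrix m p R) * Mᵀ = fromCols 1 0) ↔
      ∃ A ∈ specialOrthogonalGroup m R, ∃ B ∈ specialOrthogonalGroup p R,
        M = fromBlocks A 0 0 B := by
  constructor
  · rintro ⟨Q, hQ, h⟩
    have hQQ : Qᵀ * Q = 1 := (mem_orthogonalGroup_iff' _ _).mp hQ.1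
    rw [Matrix.mul_assoc, fromCols_one_zero_mul_transpose, mul_fromCols, fromCols_ext_iff] at h
    have h₁₁ : M.toBlocks₁₁ = Q := by
      rw [← transpose_transpose M.toBlocks₁₁, ← Matrix.one_mul M.toBlocks₁₁ᵀ, ← hQQ,
        Matrix.mul_assoc, h.1, Matrix.mul_one, transpose_transpose]
    have h₂₁ : M.toBlocks₂₁ = 0 := by
      rw [← transpose_eq_zero, ← Matrix.one_mul M.toBlocks₂₁ᵀ, ← hQQ, Matrix.mul_assoc, h.2,
        Matrix.mul_zero]
    have h₁₂ : M.toBlocks₁₂ = 0 := toBlocks₁₂_eq_zero_of_transpose_mul_self_eq_one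
      ((mem_orthogonalGroup_iff' _ _).mp hM.1) h₂₁
    rw [← fromBlocks_toBlocks M, h₁₁, h₁₂, h₂₁] at hM ⊢
    exact ⟨Q, hQ, _, fromBlocks_zero_zero_mem_specialOrthogonalGroup hQ hM, rfl⟩
  · rintro ⟨A, hA, B, -, rfl⟩
    refine ⟨A, hA, ?_⟩
    rw [fromBlocks_transpose, mul_fromCols, fromCols_mul_fromBlocks]
    simp [(mem_orthogonalGroup_iff _ _).mp hA.1]

end Matrix

open Matrix

def finSumFinEquivOfAdd {a b c : ℕ} (h : a + b = c) : Fin a ⊕ Fin b ≃ Fin c :=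
  finSumFinEquiv.trans (finCongr h)

theorem embedBlocks_eq_reindex {a b c : ℕ} (h : a + b = c) (A : Matrix (Fin a) (Fin a) ℝ)
    (B : Matrix (Fin b) (Fin b) ℝ) :
    embedBlocks h A B =
      reindex (finSumFinEquivOfAdd h) (finSumFinEquivOfAdd h) (fromBlocks A 0 0 B) :=
  rfl

section Lam

variable {n b : ℕ} (h : 3 + b = n - 1)

theorem Lam_eq_smul_reindex_fromCols (l : ℝ) :
    Lam n l l l = l • reindex (Equiv.refl (Fin 3)) (finSumFinEquivOfAdd h)
      (fromCols (1 : Matrix (Fin 3) (Fin 3) ℝ) (0 : Matrix (Fin 3) (Fin b) ℝ)) := by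
  ext i j
  obtain ⟨k | r, rfl⟩ := (finSumFinEquivOfAdd h).surjective j
  · fin_cases i <;> fin_cases k <;> simp [Lam, finSumFinEquivOfAdd, one_apply]
  · fin_cases i <;> simp [Lam, finSumFinEquivOfAdd] <;> omega

theorem mul_Lam_mul_transpose_reindex_eq_Lam_iff {l : ℝ} (hl : l ≠ 0)
    (Q : Matrix (Fin 3) (Fin 3) ℝ) (M : Matrix (Fin 3 ⊕ Fin b) (Fin 3 ⊕ Fin b) ℝ) :
    Q * Lam n l l l * (reindex (finSumFinEquivOfAdd h) (finSumFinEquivOfAdd h) M)ᵀ =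
        Lam n l l l ↔
      Q * fromCols (1 : Matrix (Fin 3) (Fin 3) ℝ) (0 : Matrix (Fin 3) (Fin b) ℝ) * Mᵀ =
        fromCols 1 0 := by
  have hreindex : ∀ E : Matrix (Fin 3) (Fin 3 ⊕ Fin b) ℝ,
      Q * (l • reindex (Equiv.refl _) (finSumFinEquivOfAdd h) E) *
          reindex (finSumFinEquivOfAdd h) (finSumFinEquivOfAdd h) Mᵀ =
        l • reindex (Equiv.refl _) (finSumFinEquivOfAdd h) (Q * E * Mᵀ) := by
    intro E
    conv_lhs => rw [← reindex_refl_refl Q]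
    simp only [Matrix.mul_smul, Matrix.smul_mul, ← coe_reindexLinearEquiv ℝ,
      reindexLinearEquiv_mul]
  rw [Lam_eq_smul_reindex_fromCols h, transpose_reindex, hreindex,
    (smul_right_injective _ hl).eq_iff, (reindex _ _).injective.eq_iff]

end Lam

/-- Three-dimensional spherical top case: for `n ≥ 4` and `λ₁ = λ₂ = λ₃ = λ > 0`, a matrix
`K ∈ SO(n-1)` satisfies `∃ Q ∈ SO(3), Q Λ Kᵀ = Λ` iff `K = diag(A, B)` with `A ∈ SO(3)`
and `B ∈ SO(n-4)`. -/
theorem stmt_7 (n : ℕ) (hn : 4 ≤ n) (l : ℝ) (hl : 0 < l)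
    (K : Matrix (Fin (n - 1)) (Fin (n - 1)) ℝ)
    (hK : K.transpose * K = 1 ∧ K.det = 1) :
    (∃ Q : Matrix (Fin 3) (Fin 3) ℝ,
        (Q.transpose * Q = 1 ∧ Q.det = 1) ∧
        Q * Lam n l l l * K.transpose = Lam n l l l) ↔
      ∃ (A : Matrix (Fin 3) (Fin 3) ℝ) (B : Matrix (Fin (n - 4)) (Fin (n - 4)) ℝ),
        (A.transpose * A = 1 ∧ A.det = 1) ∧
        (B.transpose * B = 1 ∧ B.det = 1) ∧
        K = embedBlocks (by omega : 3 + (n - 4) = n - 1) A B := by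
  have h : 3 + (n - 4) = n - 1 := by omega
  obtain ⟨M, rfl⟩ := (reindex (finSumFinEquivOfAdd h) (finSumFinEquivOfAdd h)).surjective K
  rw [← mem_orthogonalGroup_iff', ← mem_specialOrthogonalGroup_iff,
    reindex_mem_specialOrthogonalGroup_iff] at hK
  have key := exists_mem_specialOrthogonalGroup_mul_fromCols_mul_transpose_iff hK
  simp only [mem_specialOrthogonalGroup_iff, mem_orthogonalGroup_iff'] at key
  simp_rw [mul_Lam_mul_transpose_reindex_eq_Lam_iff h hl.ne', embedBlocks_eq_reindex,
    (reindex _ _).injective.eq_iff]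
  simpa [and_assoc] using key
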